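/- On Ω^i_d = K^{d−i}_d, the quantum de Rham differential δ and Koszul differential κ satisfy the homotopy identity (−q⁻¹)² δκ + κδ = ((−q⁻¹)²)^i (d)_{q²} · Id, where (d)_{q²} = 1 + q² + ⋯ + q^{2(d−1)}. -/

import Mathlib

/-!
On a monomial `a * u`, with `a` a generator and `u` spanned by words with `c` symmetric letters,
`δ` and `κ` obey twisted Leibniz rules:
`δ (x_i u) = q^c y_i u + x_i δ u`, `δ (y_i u) = -q⁻¹ y_i δ u`, `κ (x_i u) = x_i κ u` and
`κ (y_i u) = q^c x_i u - q⁻¹ y_i κ u`.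
Expanding `q⁻² δκ + κδ` on `x_i u` and `y_i u` with these rules, the cross terms in `y_i κ u`
and `x_i δ u` cancel (`q⁻² q^(c+1) = q^(c-1)`). So if `q⁻² δκ + κδ` multiplies `u` by `μ`, it
multiplies `x_i u` by `μ + q^(2c)` and `y_i u` by `q⁻² (μ + q^(2c))`; induction along a word
with `d` letters, `e` of them exterior, gives `q^(-2e) (1 + q² + ⋯ + q^(2(d-1)))`.
-/

/-- Generators of the algebra `Ω(n) = S_q(V_n) ⊗ Λ_q(V_n)`: `Sum.inl i` stands for
`x_i = e_i ⊗ 1` (symmetric generator) and `Sum.inr i` for `y_i = 1 ⊗ e_i` (exterior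
generator). -/
abbrev OmegaLetter (n : ℕ) := Fin n ⊕ Fin n

/-- The defining relations of the algebra `Ω(n) = S_q(V_n) ⊗ Λ_q(V_n)` with product
twisted by the braiding (quantum de Rham algebra). -/
inductive omegaRel (K : Type*) [Field K] (q : K) (n : ℕ) :
    FreeAlgebra K (OmegaLetter n) → FreeAlgebra K (OmegaLetter n) → Prop
  | xx {i j : Fin n} (h : j < i) :
      omegaRel K q n (FreeAlgebra.ι K (Sum.inl i) * FreeAlgebra.ι K (Sum.inl j))
        (q • (FreeAlgebra.ι K (Sum.inl j) * FreeAlgebra.ι K (Sum.inl i)))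
  | yx_gt {i j : Fin n} (h : j < i) :
      omegaRel K q n (FreeAlgebra.ι K (Sum.inr j) * FreeAlgebra.ι K (Sum.inl i))
        (FreeAlgebra.ι K (Sum.inl i) * FreeAlgebra.ι K (Sum.inr j))
  | yx_eq (i : Fin n) :
      omegaRel K q n (FreeAlgebra.ι K (Sum.inr i) * FreeAlgebra.ι K (Sum.inl i))
        (q • (FreeAlgebra.ι K (Sum.inl i) * FreeAlgebra.ι K (Sum.inr i)))
  | yx_lt {i j : Fin n} (h : i < j) :
      omegaRel K q n (FreeAlgebra.ι K (Sum.inr j) * FreeAlgebra.ι K (Sum.inl i))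
        ((q - q⁻¹) • (FreeAlgebra.ι K (Sum.inl j) * FreeAlgebra.ι K (Sum.inr i)) +
          FreeAlgebra.ι K (Sum.inl i) * FreeAlgebra.ι K (Sum.inr j))
  | yy {i j : Fin n} (h : j < i) :
      omegaRel K q n (FreeAlgebra.ι K (Sum.inr i) * FreeAlgebra.ι K (Sum.inr j))
        ((-q⁻¹) • (FreeAlgebra.ι K (Sum.inr j) * FreeAlgebra.ι K (Sum.inr i)))
  | ysq (i : Fin n) :
      omegaRel K q n (FreeAlgebra.ι K (Sum.inr i) * FreeAlgebra.ι K (Sum.inr i)) 0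

/-- The algebra `Ω(n) = S_q(V_n) ⊗ Λ_q(V_n)` with braided product, presented by
generators and relations. -/
abbrev OmegaAlg (K : Type*) [Field K] (q : K) (n : ℕ) := RingQuot (omegaRel K q n)

namespace OmegaAlg

variable (K : Type*) [Field K] (q : K) (n : ℕ)

/-- The generators of `Ω(n)`. -/
noncomputable def gen (g : OmegaLetter n) : OmegaAlg K q n :=
  RingQuot.mkAlgHom K (omegaRel K q n) (FreeAlgebra.ι K g)

/-- The symmetric generator `x_i = e_i ⊗ 1`. -/
noncomputable def X (i : Fin n) : OmegaAlg K q n := gen K q n (Sum.inl i)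

/-- The exterior generator `y_i = 1 ⊗ e_i`. -/
noncomputable def Y (i : Fin n) : OmegaAlg K q n := gen K q n (Sum.inr i)

/-- The image in `Ω(n)` of a word in the generators. -/
noncomputable def wordProd (w : List (OmegaLetter n)) : OmegaAlg K q n :=
  (w.map (gen K q n)).prod

/-- The number of symmetric letters `x` in a word. -/
def countX (w : List (OmegaLetter n)) : ℕ := (w.filter Sum.isLeft).length

/-- The number of exterior letters `y` in a word. -/
def countY (w : List (OmegaLetter n)) : ℕ := (w.filter Sum.isRight).length

/-- The bigraded piece `Ω^i_d(n) = S_q^{d-i}(n) ⊗ Λ_q^i(n)`: the span of the words with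
`d` letters, `i` of which are exterior. -/
noncomputable def piece (i d : ℕ) : Submodule K (OmegaAlg K q n) :=
  Submodule.span K {a : OmegaAlg K q n | ∃ w : List (OmegaLetter n),
    w.length = d ∧ countY n w = i ∧ a = wordProd K q n w}

/-- The property that `δ` is the quantum de Rham differential: on the word monomials of
`Ω(n)` it deconcatenates one symmetric letter (with the appropriate braiding twist) and
multiplies it into the exterior factor, replacing one `x`-letter by the corresponding
`y`-letter. -/
def IsDeRham (δ : OmegaAlg K q n →ₗ[K] OmegaAlg K q n) : Prop :=
  ∀ w : List (OmegaLetter n),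
    δ (wordProd K q n w) =
      ∑ k : Fin w.length,
        Sum.elim
          (fun i : Fin n =>
            ((-q⁻¹) ^ countY n (w.take k) * q ^ countX n (w.drop (k + 1))) •
              wordProd K q n (w.set k (Sum.inr i)))
          (fun _ : Fin n => (0 : OmegaAlg K q n))
          (w.get k)

/-- The property that `κ` is the quantum Koszul differential: on the word monomials of
`Ω(n)` it deconcatenates one exterior letter (with the appropriate braiding twist) and
multiplies it into the symmetric factor, replacing one `y`-letter by the corresponding
`x`-letter. -/
def IsKoszul (κ : OmegaAlg K q n →ₗ[K] OmegaAlg K q n) : Prop :=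
  ∀ w : List (OmegaLetter n),
    κ (wordProd K q n w) =
      ∑ k : Fin w.length,
        Sum.elim
          (fun _ : Fin n => (0 : OmegaAlg K q n))
          (fun i : Fin n =>
            ((-q⁻¹) ^ countY n (w.take k) * q ^ countX n (w.drop (k + 1))) •
              wordProd K q n (w.set k (Sum.inl i)))
          (w.get k)

end OmegaAlg

namespace OmegaAlg

variable {K : Type*} [Field K] {q : K} {n : ℕ}

lemma wordProd_cons (a : OmegaLetter n) (w : List (OmegaLetter n)) :
    wordProd K q n (a :: w) = gen K q n a * wordProd K q n w := by
  simp [wordProd]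

lemma countX_eq_countP (w : List (OmegaLetter n)) : countX n w = w.countP Sum.isLeft :=
  List.countP_eq_length_filter.symm

lemma countX_add_countY (w : List (OmegaLetter n)) : countX n w + countY n w = w.length := by
  induction w with
  | nil => rfl
  | cons a w ih => rcases a <;> simp [countX, countY, List.filter_cons] at ih ⊢ <;> omega

@[simp]
lemma countY_nil : countY n [] = 0 := rfl

@[simp]
lemma countY_inl_cons (i : Fin n) (w : List (OmegaLetter n)) :
    countY n (Sum.inl i :: w) = countY n w := by
  simp [countY]

@[simp]
lemma countY_inr_cons (i : Fin n) (w : List (OmegaLetter n)) :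
    countY n (Sum.inr i :: w) = countY n w + 1 := by
  simp [countY, List.filter_cons]

lemma countY_cons (a : OmegaLetter n) (w : List (OmegaLetter n)) :
    countY n (a :: w) = countY n [a] + countY n w := by
  rcases a with i | i <;> simp [Nat.add_comm]

variable (K q) in
/-- The common shape of `IsDeRham` (`b = true`) and `IsKoszul` (`b = false`) on a word: a
twisted sum over the positions holding a letter of the chosen kind, swapped to the other kind. -/
noncomputable def swapSum (b : Bool) (w : List (OmegaLetter n)) : OmegaAlg K q n :=
  ∑ k : Fin w.length, if (w.get k).isLeft = b then
    ((-q⁻¹) ^ countY n (w.take k) * q ^ countX n (w.drop (k + 1))) •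
      wordProd K q n (w.set k (w.get k).swap)
  else 0

lemma IsDeRham.apply_wordProd {δ : OmegaAlg K q n →ₗ[K] OmegaAlg K q n}
    (hδ : IsDeRham K q n δ) (w : List (OmegaLetter n)) :
    δ (wordProd K q n w) = swapSum K q true w := by
  rw [hδ, swapSum]
  refine Finset.sum_congr rfl fun k _ => ?_
  rcases w.get k with i | i <;> simp

lemma IsKoszul.apply_wordProd {κ : OmegaAlg K q n →ₗ[K] OmegaAlg K q n}
    (hκ : IsKoszul K q n κ) (w : List (OmegaLetter n)) :
    κ (wordProd K q n w) = swapSum K q false w := by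
  rw [hκ, swapSum]
  refine Finset.sum_congr rfl fun k _ => ?_
  rcases w.get k with i | i <;> simp

lemma swapSum_nil (b : Bool) : swapSum K q b ([] : List (OmegaLetter n)) = 0 := by
  simp [swapSum]

lemma swapSum_cons (b : Bool) (a : OmegaLetter n) (w : List (OmegaLetter n)) :
    swapSum K q b (a :: w) =
      (if a.isLeft = b then q ^ countX n w • wordProd K q n (a.swap :: w) else 0) +
        (-q⁻¹) ^ countY n [a] • (gen K q n a * swapSum K q b w) := by
  rw [swapSum, swapSum, Finset.mul_sum, Finset.smul_sum]
  refine (Fin.sum_univ_succ _).trans (congrArg₂ _ ?_ ?_)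
  · simp [countY]
  · refine Finset.sum_congr rfl fun k _ => ?_
    simp only [Fin.val_succ, List.get_eq_getElem, List.getElem_cons_succ, List.take_succ_cons,
      List.drop_succ_cons, List.set_cons_succ, wordProd_cons]
    rw [countY_cons a]
    split_ifs <;> simp [pow_add, smul_smul, mul_assoc]

variable (K q n) in
/-- Indexed by `ℤ` so that `δ` lowers the degree by one without truncated subtraction. -/
noncomputable def xHomog (c : ℤ) : Submodule K (OmegaAlg K q n) :=
  Submodule.span K
    {a | ∃ w : List (OmegaLetter n), (countX n w : ℤ) = c ∧ a = wordProd K q n w}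

lemma wordProd_mem_xHomog (w : List (OmegaLetter n)) :
    wordProd K q n w ∈ xHomog K q n (countX n w) :=
  Submodule.subset_span ⟨w, rfl, rfl⟩

lemma swapSum_mem_xHomog (b : Bool) (w : List (OmegaLetter n)) :
    swapSum K q b w ∈ xHomog K q n (countX n w + if b then -1 else 1) := by
  refine Submodule.sum_mem _ fun k _ => ?_
  by_cases hk : (w.get k).isLeft = b
  · rw [if_pos hk]
    refine Submodule.smul_mem _ _ (Submodule.subset_span ⟨_, ?_, rfl⟩)
    have hmem := List.get_mem w k
    rw [countX_eq_countP, countX_eq_countP, List.countP_set k.isLt, ← List.get_eq_getElem]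
    rcases hw : w.get k with i | i <;> rw [hw] at hk hmem <;> subst hk
    · have : 0 < w.countP Sum.isLeft := List.countP_pos_iff.2 ⟨_, hmem, rfl⟩
      simp only [Sum.isLeft_inl, Sum.swap_inl, Sum.isLeft_inr, if_true, if_false,
        Bool.false_eq_true]
      omega
    · simp
  · rw [if_neg hk]
    exact zero_mem _

lemma map_mem_xHomog_of_eq_swapSum {b : Bool} {D : OmegaAlg K q n →ₗ[K] OmegaAlg K q n}
    (hD : ∀ w, D (wordProd K q n w) = swapSum K q b w) {c : ℤ} {u : OmegaAlg K q n}
    (hu : u ∈ xHomog K q n c) : D u ∈ xHomog K q n (c + if b then -1 else 1) := by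
  refine (Submodule.span_le (p := (xHomog K q n _).comap D)).2 ?_ hu
  rintro _ ⟨w, rfl, rfl⟩
  simpa [hD] using swapSum_mem_xHomog b w

lemma map_gen_mul_of_eq_swapSum {b : Bool} {D : OmegaAlg K q n →ₗ[K] OmegaAlg K q n}
    (hD : ∀ w, D (wordProd K q n w) = swapSum K q b w) (a : OmegaLetter n) {c : ℤ}
    {u : OmegaAlg K q n} (hu : u ∈ xHomog K q n c) :
    D (gen K q n a * u) =
      (if a.isLeft = b then q ^ c • (gen K q n a.swap * u) else 0) +
        (-q⁻¹) ^ countY n [a] • (gen K q n a * D u) := by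
  induction hu using Submodule.span_induction with
  | mem x hx =>
    obtain ⟨w, rfl, rfl⟩ := hx
    rw [← wordProd_cons, hD, hD, swapSum_cons, wordProd_cons, zpow_natCast]
  | zero => simp
  | add x y _ _ hx hy =>
    rw [mul_add, map_add, hx, hy, mul_add, map_add, mul_add]
    split_ifs <;> module
  | smul r x _ hx =>
    simp only [mul_smul_comm, map_smul, hx]
    split_ifs <;> module

section Differentials

variable {δ κ : OmegaAlg K q n →ₗ[K] OmegaAlg K q n} {c : ℤ} {u : OmegaAlg K q n}

lemma IsDeRham.map_X_mul (hδ : IsDeRham K q n δ) (i : Fin n) (hu : u ∈ xHomog K q n c) :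
    δ (X K q n i * u) = q ^ c • (Y K q n i * u) + X K q n i * δ u := by
  simpa [X, Y] using map_gen_mul_of_eq_swapSum hδ.apply_wordProd (Sum.inl i) hu

lemma IsDeRham.map_Y_mul (hδ : IsDeRham K q n δ) (i : Fin n) (hu : u ∈ xHomog K q n c) :
    δ (Y K q n i * u) = -q⁻¹ • (Y K q n i * δ u) := by
  simpa [Y] using map_gen_mul_of_eq_swapSum hδ.apply_wordProd (Sum.inr i) hu

lemma IsKoszul.map_X_mul (hκ : IsKoszul K q n κ) (i : Fin n) (hu : u ∈ xHomog K q n c) :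
    κ (X K q n i * u) = X K q n i * κ u := by
  simpa [X] using map_gen_mul_of_eq_swapSum hκ.apply_wordProd (Sum.inl i) hu

lemma IsKoszul.map_Y_mul (hκ : IsKoszul K q n κ) (i : Fin n) (hu : u ∈ xHomog K q n c) :
    κ (Y K q n i * u) = q ^ c • (X K q n i * u) + -q⁻¹ • (Y K q n i * κ u) := by
  simpa [X, Y] using map_gen_mul_of_eq_swapSum hκ.apply_wordProd (Sum.inr i) hu

lemma IsDeRham.map_mem_xHomog (hδ : IsDeRham K q n δ) (hu : u ∈ xHomog K q n c) :
    δ u ∈ xHomog K q n (c - 1) := by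
  simpa [sub_eq_add_neg] using map_mem_xHomog_of_eq_swapSum hδ.apply_wordProd hu

lemma IsKoszul.map_mem_xHomog (hκ : IsKoszul K q n κ) (hu : u ∈ xHomog K q n c) :
    κ u ∈ xHomog K q n (c + 1) := by
  simpa using map_mem_xHomog_of_eq_swapSum hκ.apply_wordProd hu

lemma homotopy_X_mul (hq : q ≠ 0) (hδ : IsDeRham K q n δ) (hκ : IsKoszul K q n κ) (i : Fin n)
    {μ : K} (hu : u ∈ xHomog K q n c) (h : (-q⁻¹) ^ 2 • δ (κ u) + κ (δ u) = μ • u) :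
    (-q⁻¹) ^ 2 • δ (κ (X K q n i * u)) + κ (δ (X K q n i * u)) =
      (μ + q ^ c * q ^ c) • (X K q n i * u) := by
  rw [hκ.map_X_mul i hu, hδ.map_X_mul i (hκ.map_mem_xHomog hu), hδ.map_X_mul i hu, map_add,
    map_smul, hκ.map_Y_mul i hu, hκ.map_X_mul i (hδ.map_mem_xHomog hu), eq_sub_of_add_eq' h]
  simp only [smul_add, mul_sub, mul_smul_comm, smul_smul, zpow_add_one₀ hq]
  match_scalars <;> field_simp <;> ring

lemma homotopy_Y_mul (hq : q ≠ 0) (hδ : IsDeRham K q n δ) (hκ : IsKoszul K q n κ) (i : Fin n)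
    {μ : K} (hu : u ∈ xHomog K q n c) (h : (-q⁻¹) ^ 2 • δ (κ u) + κ (δ u) = μ • u) :
    (-q⁻¹) ^ 2 • δ (κ (Y K q n i * u)) + κ (δ (Y K q n i * u)) =
      ((-q⁻¹) ^ 2 * (μ + q ^ c * q ^ c)) • (Y K q n i * u) := by
  rw [hκ.map_Y_mul i hu, map_add, map_smul, map_smul, hδ.map_X_mul i hu,
    hδ.map_Y_mul i (hκ.map_mem_xHomog hu), hδ.map_Y_mul i hu, map_smul,
    hκ.map_Y_mul i (hδ.map_mem_xHomog hu), eq_sub_of_add_eq' h]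
  simp only [smul_add, mul_sub, mul_smul_comm, smul_smul, zpow_sub_one₀ hq]
  match_scalars <;> field_simp <;> ring

theorem homotopy_wordProd (hq : q ≠ 0) (hδ : IsDeRham K q n δ) (hκ : IsKoszul K q n κ)
    (w : List (OmegaLetter n)) :
    (-q⁻¹) ^ 2 • δ (κ (wordProd K q n w)) + κ (δ (wordProd K q n w)) =
      (((-q⁻¹) ^ 2) ^ countY n w * ∑ t ∈ Finset.range w.length, (q ^ 2) ^ t) •
        wordProd K q n w := by
  induction w with
  | nil => simp [hδ.apply_wordProd, hκ.apply_wordProd, swapSum_nil]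
  | cons a w ih =>
    have hu := wordProd_mem_xHomog (K := K) (q := q) w
    have hstep : ((-q⁻¹) ^ 2) ^ countY n w * ∑ t ∈ Finset.range (w.length + 1), (q ^ 2) ^ t =
        ((-q⁻¹) ^ 2) ^ countY n w * ∑ t ∈ Finset.range w.length, (q ^ 2) ^ t +
          q ^ (countX n w : ℤ) * q ^ (countX n w : ℤ) := by
      have hr : ((-q⁻¹) ^ 2) ^ countY n w * (q ^ 2) ^ countY n w = 1 := by
        rw [← mul_pow, neg_sq, inv_pow, inv_mul_cancel₀ (pow_ne_zero 2 hq), one_pow]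
      rw [Finset.sum_range_succ, ← countX_add_countY, zpow_natCast]
      linear_combination (q ^ 2) ^ countX n w * hr
    rw [wordProd_cons, List.length_cons]
    rcases a with i | i
    · rw [countY_inl_cons, hstep]
      exact homotopy_X_mul hq hδ hκ i hu ih
    · rw [countY_inr_cons, pow_succ' ((-q⁻¹) ^ 2), mul_assoc, hstep]
      exact homotopy_Y_mul hq hδ hκ i hu ih

end Differentials

end OmegaAlg

/-- On `Ω^i_d = K^{d−i}_d`, the quantum de Rham differential `δ` and
the Koszul differential `κ` satisfy the homotopy identity
`(−q⁻¹)² δκ + κδ = ((−q⁻¹)²)^i (d)_{q²} · Id`, where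
`(d)_{q²} = 1 + q² + ⋯ + q^{2(d−1)}`. -/
theorem stmt10 (K : Type*) [Field K] (q : K) (hq : q ≠ 0) (n : ℕ)
    (δ κ : OmegaAlg K q n →ₗ[K] OmegaAlg K q n)
    (hδ : OmegaAlg.IsDeRham K q n δ) (hκ : OmegaAlg.IsKoszul K q n κ)
    (i d : ℕ) (a : OmegaAlg K q n) (ha : a ∈ OmegaAlg.piece K q n i d) :
    (-q⁻¹) ^ 2 • δ (κ a) + κ (δ a) =
      ((-q⁻¹) ^ 2) ^ i • (∑ t ∈ Finset.range d, (q ^ 2) ^ t) • a := by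
  have hspan := LinearMap.eqOn_span' (f := (-q⁻¹) ^ 2 • δ ∘ₗ κ + κ ∘ₗ δ)
    (g := (((-q⁻¹) ^ 2) ^ i * ∑ t ∈ Finset.range d, (q ^ 2) ^ t) • LinearMap.id) ?_ ha
  · simpa [mul_smul] using hspan
  · rintro _ ⟨w, rfl, rfl, rfl⟩
    exact OmegaAlg.homotopy_wordProd hq hδ hκ w
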